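/- Define λ_k(x) = [ν_k(x) − (ν(x),μ(x)) μ_k(x)]/τ_n(x), the Gram–Schmidt orthonormalization of ν against μ. Then λ_k(x) = μ_k(x) · √n (u − u_0)(1+x^2)/x for x ≠ 0, where u = k/n and u_0 = x^2/(1+x^2). -/

import Mathlib

/-! Writing `ζ_n(x) = √n √(1 + n x²) (1 + x²)^{n/2} / (1 + x²)`, both `ν_k` and `μ_k` become
`x^k √C(n,k) / (1 + x²)^{n/2}` times a rational function of `x`, `k` and `n`
(using `k x^{k-1} · x = k x^k`), and the identity reduces to field arithmetic. -/

theorem Real.sqrt_mul_mul_rpow_sub_two {a : ℝ} (ha : 0 < a) {b c : ℝ} (hb : 0 ≤ b) (hc : 0 ≤ c)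
    (n : ℕ) :
    √(b * c * a ^ ((n : ℝ) - 2)) = √b * √c * √(a ^ n) / a := by
  rw [Real.rpow_sub ha, Real.rpow_natCast, Real.rpow_two, Real.sqrt_mul (by positivity),
    Real.sqrt_mul hb, Real.sqrt_div' _ (by positivity), Real.sqrt_sq ha.le]
  ring

theorem natCast_mul_pow_pred_mul {R : Type*} [CommSemiring R] (k : ℕ) (x : R) :
    (k : R) * x ^ (k - 1) * x = k * x ^ k := by
  rcases k with _ | k
  · simp
  · rw [mul_assoc, Nat.add_sub_cancel, ← pow_succ]

theorem lambda_formula_general (n : ℕ) (hn : 1 ≤ n) (x : ℝ) (hx : x ≠ 0) (k : ℕ) :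
    let μ : ℕ → ℝ := fun k => x ^ k * Real.sqrt (n.choose k) / Real.sqrt ((1 + x ^ 2) ^ n)
    let ν : ℕ → ℝ := fun k => (k : ℝ) * x ^ (k - 1) * Real.sqrt (n.choose k) /
      Real.sqrt (n * (1 + n * x ^ 2) * (1 + x ^ 2) ^ ((n : ℝ) - 2))
    let ρ : ℝ := x * Real.sqrt n / Real.sqrt (1 + n * x ^ 2)
    let τ : ℝ := 1 / Real.sqrt (1 + n * x ^ 2)
    (ν k - ρ * μ k) / τ
      = μ k * Real.sqrt n * ((k : ℝ) / n - x ^ 2 / (1 + x ^ 2)) * (1 + x ^ 2) / x := by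
  intro μ ν ρ τ
  have hn' : (0 : ℝ) < n := by exact_mod_cast hn
  have hnx : (0 : ℝ) < 1 + n * x ^ 2 := by positivity
  have hζ := Real.sqrt_mul_mul_rpow_sub_two (by positivity : (0 : ℝ) < 1 + x ^ 2) hn'.le hnx.le n
  have hsq_n : √(n : ℝ) * √(n : ℝ) = n := Real.mul_self_sqrt hn'.le
  simp only [μ, ν, ρ, τ, hζ]
  field_simp
  linear_combination (√(n.choose k : ℝ) * n * (1 + x ^ 2)) * natCast_mul_pow_pred_mul k x
    - (√(n.choose k : ℝ) * k * x ^ k * (1 + x ^ 2)) * hsq_n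

theorem lambda_formula (n : ℕ) (hn : 1 ≤ n) (x : ℝ) (hx : x ≠ 0) (k : ℕ) (hk : k ≤ n) :
    let μ : ℕ → ℝ := fun k => x ^ k * Real.sqrt (n.choose k) / Real.sqrt ((1 + x ^ 2) ^ n)
    let ν : ℕ → ℝ := fun k => (k : ℝ) * x ^ (k - 1) * Real.sqrt (n.choose k) /
      Real.sqrt (n * (1 + n * x ^ 2) * (1 + x ^ 2) ^ ((n : ℝ) - 2))
    let ρ : ℝ := x * Real.sqrt n / Real.sqrt (1 + n * x ^ 2)
    let τ : ℝ := 1 / Real.sqrt (1 + n * x ^ 2)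
    (ν k - ρ * μ k) / τ
      = μ k * Real.sqrt n * ((k : ℝ) / n - x ^ 2 / (1 + x ^ 2)) * (1 + x ^ 2) / x :=
  lambda_formula_general n hn x hx k
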